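/- Let Θ := Z_{K−1} ⋯ Z₂ Z₁ be the product (in decreasing order of indices) of n×n complex matrices Z₁, …, Z_{K−1} satisfying the hypotheses of the general composition law, namely: for each j with 1 ≤ j ≤ K−1 the partial product Θ_j := Z_{K−1} ⋯ Z_{j+1} is invertible and Z_j = (Θ_j⁻¹ Ω_jᴴ Θ_j) Ω_j for some n×n complex matrices Ω₁, …, Ω_{K−1}. If moreover the composed map Ω := Ω_{K−1} ⋯ Ω₁ is invertible, then Θ is a Hermitian positive definite matrix. -/

import Mathlib

open Matrix ComplexOrder

/-! Downward induction on `k` shows `Θ_k = Aᴴ A` with `A = Ω_{K-1} ⋯ Ω_{k+1}`: if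
`P = Θ_{k+1} = Aᴴ A`, the factorization `Z_{k+1} = P⁻¹ Wᴴ P W` with `W = Ω_{k+1}` gives
`Θ_k = P Z_{k+1} = Wᴴ Aᴴ A W = (A W)ᴴ (A W)`. At `k = 0` this is `Ωᴴ Ω` with `Ω` invertible,
which is positive definite. -/

/-- The descending product `Z_{K-1} * Z_{K-2} * ⋯ * Z_{k+1}`
(the identity matrix when `k ≥ K-1`). -/
noncomputable def descProd {n : ℕ} (Z : ℕ → Matrix (Fin n) (Fin n) ℂ) (K k : ℕ) :
    Matrix (Fin n) (Fin n) ℂ :=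
  ((List.range (K - 1 - k)).map (fun i => Z (K - 1 - i))).prod

section descProd

variable {n : ℕ} (Z : ℕ → Matrix (Fin n) (Fin n) ℂ) (K : ℕ)

lemma descProd_of_le {k : ℕ} (hk : K - 1 ≤ k) : descProd Z K k = 1 := by
  simp [descProd, Nat.sub_eq_zero_of_le hk]

lemma descProd_eq_descProd_succ_mul {k : ℕ} (hk : k + 1 ≤ K - 1) :
    descProd Z K k = descProd Z K (k + 1) * Z (k + 1) := by
  have hlen : K - 1 - k = (K - 1 - (k + 1)) + 1 := by omega
  have hlast : K - 1 - (K - 1 - (k + 1)) = k + 1 := by omega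
  simp only [descProd, hlen, List.range_succ, List.map_append, List.prod_append, hlast,
    List.map_cons, List.map_nil, List.prod_cons, List.prod_nil, mul_one]

end descProd

theorem descProd_eq_conjTranspose_mul_self {n K : ℕ} (Z Ω : ℕ → Matrix (Fin n) (Fin n) ℂ)
    (hinv : ∀ j, 1 ≤ j → j ≤ K - 1 → IsUnit (descProd Z K j))
    (hfac : ∀ j, 1 ≤ j → j ≤ K - 1 →
      Z j = ((descProd Z K j)⁻¹ * (Ω j)ᴴ * (descProd Z K j)) * Ω j)
    (k : ℕ) : descProd Z K k = (descProd Ω K k)ᴴ * descProd Ω K k := by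
  by_cases hk : k + 1 ≤ K - 1
  · have ih := descProd_eq_conjTranspose_mul_self Z Ω hinv hfac (k + 1)
    have hdet : IsUnit (descProd Z K (k + 1)).det :=
      (isUnit_iff_isUnit_det _).mp (hinv (k + 1) (by omega) hk)
    rw [descProd_eq_descProd_succ_mul Z K hk, descProd_eq_descProd_succ_mul Ω K hk,
      hfac (k + 1) (by omega) hk]
    set P := descProd Z K (k + 1)
    set A := descProd Ω K (k + 1)
    set W := Ω (k + 1)
    calc P * (P⁻¹ * Wᴴ * P * W) = P * (P⁻¹ * (Wᴴ * P * W)) := by simp only [Matrix.mul_assoc]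
      _ = Wᴴ * P * W := mul_nonsing_inv_cancel_left _ _ hdet
      _ = (A * W)ᴴ * (A * W) := by
          rw [ih, conjTranspose_mul]
          simp only [Matrix.mul_assoc]
  · rw [descProd_of_le Z K (by omega), descProd_of_le Ω K (by omega)]
    simp
termination_by K - 1 - k

theorem factorized_metric_posDef_general (n K : ℕ)
    (Z Ω : ℕ → Matrix (Fin n) (Fin n) ℂ)
    (hinv : ∀ j, 1 ≤ j → j ≤ K - 1 → IsUnit (descProd Z K j))
    (hfac : ∀ j, 1 ≤ j → j ≤ K - 1 →
      Z j = ((descProd Z K j)⁻¹ * (Ω j)ᴴ * (descProd Z K j)) * Ω j)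
    (hΩ : IsUnit (descProd Ω K 0)) :
    (descProd Z K 0).PosDef := by
  rw [descProd_eq_conjTranspose_mul_self Z Ω hinv hfac 0]
  exact PosDef.conjTranspose_mul_self _ (mulVec_injective_of_isUnit hΩ)

/-- The factorized metric Θ = Z_{K-1} ⋯ Z₁ = Ωᴴ Ω (with Ω the invertible composed
Dyson map) is an admissible, i.e. Hermitian positive definite, metric. -/
theorem factorized_metric_posDef (n K : ℕ) (hK : 2 ≤ K)
    (Z Ω : ℕ → Matrix (Fin n) (Fin n) ℂ)
    (hinv : ∀ j, 1 ≤ j → j ≤ K - 1 → IsUnit (descProd Z K j))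
    (hfac : ∀ j, 1 ≤ j → j ≤ K - 1 →
      Z j = ((descProd Z K j)⁻¹ * (Ω j)ᴴ * (descProd Z K j)) * Ω j)
    (hΩ : IsUnit (descProd Ω K 0)) :
    (descProd Z K 0).PosDef :=
  factorized_metric_posDef_general n K Z Ω hinv hfac hΩ
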